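/- Let α ∈ (1,2) and λ > 0. Then for every t > 0 the Caputo derivative identity ∂_t^α E_α(−λ t^α) = −λ E_α(−λ t^α) holds; explicitly, (1/Γ(2−α)) ∫_0^t (t−τ)^{1−α} ( −λ τ^{α−2} E_{α,α−1}(−λ τ^α) ) dτ = −λ E_α(−λ t^α), where −λ τ^{α−2} E_{α,α−1}(−λ τ^α) is the second derivative of τ ↦ E_α(−λ τ^α) on (0,∞). -/

import Mathlib

/-- The Mittag-Leffler function `E_{α,β}(x) = ∑_{k=0}^∞ x^k / Γ(αk + β)` for real `x`. -/
noncomputable def mittagLeffler (α β x : ℝ) : ℝ :=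
  ∑' k : ℕ, x ^ k / Real.Gamma (α * k + β)

/-!
Work with `τ ^ (β - 1) * E_{α,β}(c τ^α) = ∑ₖ cᵏ τ^(αk + β - 1) / Γ(αk + β)` for every real `β`.
Termwise, differentiation lowers `β` by one, because `p / Γ(p + 1) = 1 / Γ(p)` for all real `p`
once `1 / Γ` is read as `0` at the poles; and by the Beta integral, the fractional integral
`∫₀ᵗ (t - τ)^(γ-1) (⋯) dτ` raises `β` by `γ` at the cost of a factor `Γ(γ)`. Differentiating twice
from `β = 1` gives `τ⁻² E_{α,-1}(c τ^α) = c τ^(α-2) E_{α,α-1}(c τ^α)` (the `k = 0` term has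
`1 / Γ(-1) = 0`), and integrating this with `γ = 2 - α` returns to `β = 1`. For `α ≥ 1` the
coefficients are dominated by `|x|ᵏ / k!` up to a shift, which justifies both interchanges.
-/

open Real MeasureTheory intervalIntegral Set Filter Topology
open scoped Nat

namespace Real

theorem inv_Gamma_eq_self_mul_inv_Gamma_add_one (s : ℝ) :
    (Gamma s)⁻¹ = s * (Gamma (s + 1))⁻¹ := by
  rcases ne_or_eq s 0 with hs | rfl
  · rw [Gamma_add_one hs, mul_inv, mul_inv_cancel_left₀ hs]
  · rw [Gamma_zero, inv_zero, zero_mul]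

theorem rpow_mul_natCast_add {x : ℝ} (hx : 0 < x) (a b : ℝ) (k : ℕ) :
    x ^ (a * k + b) = (x ^ a) ^ k * x ^ b := by
  rw [rpow_add hx, rpow_mul hx.le, rpow_natCast]

theorem rpow_le_rpow_add_rpow {x y z : ℝ} (hx : 0 < x) (hxy : x ≤ y) (hyz : y ≤ z) (q : ℝ) :
    y ^ q ≤ x ^ q + z ^ q := by
  rcases le_total 0 q with hq | hq
  · linarith [rpow_le_rpow (hx.le.trans hxy) hyz hq, rpow_nonneg hx.le q]
  · linarith [rpow_le_rpow_of_nonpos hx hxy hq, rpow_nonneg (hx.le.trans (hxy.trans hyz)) q]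

theorem integral_rpow_mul_sub_rpow {a b t : ℝ} (ha : 0 < a) (hb : 0 < b) (ht : 0 < t) :
    ∫ x in 0..t, x ^ (a - 1) * (t - x) ^ (b - 1) =
      t ^ (a + b - 1) * (Gamma a * Gamma b / Gamma (a + b)) := by
  have h := Complex.betaIntegral_scaled a b ht
  rw [Complex.betaIntegral_eq_Gamma_mul_div _ _ (by simpa) (by simpa)] at h
  apply Complex.ofReal_injective
  rw [← intervalIntegral.integral_ofReal, Complex.ofReal_mul, Complex.ofReal_cpow ht.le]
  push_cast [← Complex.Gamma_ofReal]
  rw [← h]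
  refine intervalIntegral.integral_congr fun x hx => ?_
  rw [uIcc_of_le ht.le] at hx
  push_cast [Complex.ofReal_cpow hx.1, Complex.ofReal_cpow (sub_nonneg.2 hx.2)]
  rfl

end Real

theorem hasDerivAt_tsum_mul_rpow {a p : ℕ → ℝ}
    (hsum' : ∀ y, 0 < y → Summable fun k => |a k * p k| * y ^ (p k - 1))
    {x : ℝ} (hx : 0 < x) (hsum : Summable fun k => a k * x ^ p k) :
    HasDerivAt (fun y => ∑' k, a k * y ^ p k) (∑' k, a k * p k * x ^ (p k - 1)) x := by
  have hx₀ : 0 < x / 2 := half_pos hx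
  have hmem : x ∈ Ioo (x / 2) (2 * x) := ⟨by linarith, by linarith⟩
  have hbound : ∀ (k : ℕ), ∀ y ∈ Ioo (x / 2) (2 * x),
      ‖a k * p k * y ^ (p k - 1)‖ ≤
        |a k * p k| * (x / 2) ^ (p k - 1) + |a k * p k| * (2 * x) ^ (p k - 1) := by
    intro k y hy
    rw [norm_mul, Real.norm_eq_abs, norm_of_nonneg (rpow_nonneg (hx₀.trans hy.1).le _), ← mul_add]
    exact mul_le_mul_of_nonneg_left (rpow_le_rpow_add_rpow hx₀ hy.1.le hy.2.le _) (abs_nonneg _)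
  have hterm : ∀ (k : ℕ), ∀ y ∈ Ioo (x / 2) (2 * x),
      HasDerivAt (fun y => a k * y ^ p k) (a k * p k * y ^ (p k - 1)) y := by
    intro k y hy
    rw [mul_assoc]
    exact (hasDerivAt_rpow_const (Or.inl (hx₀.trans hy.1).ne')).const_mul (a k)
  exact hasDerivAt_tsum_of_isPreconnected ((hsum' _ hx₀).add (hsum' _ (by linarith)))
    isOpen_Ioo isPreconnected_Ioo hterm hbound hmem hsum hmem

theorem integral_tsum_mul_of_nonneg {X : Type*} [MeasurableSpace X] {μ : Measure X}
    {b : ℕ → ℝ} {g : ℕ → X → ℝ} (hg : ∀ k, 0 ≤ᵐ[μ] g k) (hint : ∀ k, Integrable (g k) μ)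
    (hsum : Summable fun k => |b k| * ∫ x, g k x ∂μ) :
    ∫ x, ∑' k, b k * g k x ∂μ = ∑' k, b k * ∫ x, g k x ∂μ := by
  have hnorm : ∀ k, ∫ x, ‖b k * g k x‖ ∂μ = |b k| * ∫ x, g k x ∂μ := by
    intro k
    rw [← MeasureTheory.integral_const_mul]
    refine integral_congr_ae ?_
    filter_upwards [hg k] with x hx
    rw [norm_mul, Real.norm_eq_abs, Real.norm_of_nonneg hx]
  rw [← integral_tsum_of_summable_integral_norm (fun k => (hint k).const_mul (b k))
    (by simpa only [hnorm] using hsum)]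
  simp_rw [MeasureTheory.integral_const_mul]

section MittagLeffler

variable {α : ℝ}

theorem summable_pow_div_Gamma (hα : 1 ≤ α) (β x : ℝ) :
    Summable fun k : ℕ => x ^ k / Gamma (α * k + β) := by
  obtain ⟨m, hm⟩ := exists_nat_ge (2 - β)
  rw [← summable_nat_add_iff m]
  refine .of_norm_bounded ((Real.summable_pow_div_factorial |x|).mul_left (|x| ^ m)) fun j => ?_
  have hj : (j + 2 : ℝ) ≤ α * ↑(j + m) + β := by
    push_cast
    nlinarith [Nat.cast_nonneg (α := ℝ) j, Nat.cast_nonneg (α := ℝ) m]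
  have hΓ : (j ! : ℝ) ≤ Gamma (α * ↑(j + m) + β) := calc
    (j ! : ℝ) ≤ (j + 1)! := by exact_mod_cast Nat.factorial_le j.le_succ
    _ = Gamma (j + 2) := by rw [← Gamma_nat_eq_factorial]; push_cast; ring_nf
    _ ≤ Gamma (α * ↑(j + m) + β) :=
      Gamma_strictMonoOn_Ici.monotoneOn (by simp) (by simp only [mem_Ici]; linarith) hj
  rw [norm_div, norm_pow, norm_of_nonneg (hΓ.trans' (by positivity)), pow_add, Real.norm_eq_abs,
    mul_comm (|x| ^ j), mul_div_assoc]
  gcongr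

theorem mittagLeffler_eq_inv_Gamma_add_mul (hα : 1 ≤ α) (β x : ℝ) :
    mittagLeffler α β x = (Gamma β)⁻¹ + x * mittagLeffler α (α + β) x := by
  rw [mittagLeffler, (summable_pow_div_Gamma hα β x).tsum_eq_zero_add, mittagLeffler,
    ← tsum_mul_left]
  congr 1
  · simp
  · refine tsum_congr fun k => ?_
    push_cast
    ring_nf

theorem rpow_mul_pow_div_Gamma (β c : ℝ) {s : ℝ} (hs : 0 < s) (k : ℕ) :
    s ^ (β - 1) * ((c * s ^ α) ^ k / Gamma (α * k + β)) =
      c ^ k / Gamma (α * k + β) * s ^ (α * k + β - 1) := by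
  rw [add_sub_assoc, rpow_mul_natCast_add hs, mul_pow]
  ring

theorem rpow_mul_mittagLeffler_eq_tsum (β c : ℝ) {s : ℝ} (hs : 0 < s) :
    s ^ (β - 1) * mittagLeffler α β (c * s ^ α) =
      ∑' k : ℕ, c ^ k / Gamma (α * k + β) * s ^ (α * k + β - 1) := by
  rw [mittagLeffler, ← tsum_mul_left]
  exact tsum_congr (rpow_mul_pow_div_Gamma β c hs)

theorem hasDerivAt_rpow_mul_mittagLeffler (hα : 1 ≤ α) (β c : ℝ) {s : ℝ} (hs : 0 < s) :
    HasDerivAt (fun s => s ^ (β - 1) * mittagLeffler α β (c * s ^ α))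
      (s ^ (β - 2) * mittagLeffler α (β - 1) (c * s ^ α)) s := by
  have hcoeff : ∀ k : ℕ, c ^ k / Gamma (α * k + β) * (α * k + β - 1) =
      c ^ k / Gamma (α * k + (β - 1)) := by
    intro k
    rw [div_eq_mul_inv, div_eq_mul_inv, inv_Gamma_eq_self_mul_inv_Gamma_add_one (α * k + (β - 1))]
    ring_nf
  have hseries := hasDerivAt_tsum_mul_rpow (a := fun k : ℕ => c ^ k / Gamma (α * k + β))
    (p := fun k : ℕ => α * k + β - 1) (fun y hy => ?_) hs ?_
  · have hval : s ^ (β - 2) * mittagLeffler α (β - 1) (c * s ^ α) =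
        ∑' k : ℕ, c ^ k / Gamma (α * k + β) * (α * k + β - 1) * s ^ (α * k + β - 1 - 1) := by
      rw [show β - 2 = β - 1 - 1 by ring, rpow_mul_mittagLeffler_eq_tsum _ _ hs]
      refine tsum_congr fun k => ?_
      rw [hcoeff]
      congr 2
      ring
    rw [hval]
    refine hseries.congr_of_eventuallyEq ?_
    filter_upwards [Ioi_mem_nhds hs] with y hy
    exact rpow_mul_mittagLeffler_eq_tsum β c hy
  · refine ((summable_pow_div_Gamma hα (β - 1) (c * y ^ α)).mul_left
      (y ^ (β - 1 - 1))).abs.congr fun k => ?_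
    rw [rpow_mul_pow_div_Gamma (β - 1) c hy, abs_mul, abs_of_nonneg (rpow_nonneg hy.le _),
      hcoeff]
    ring_nf
  · simpa only [rpow_mul_pow_div_Gamma β c hs] using
      (summable_pow_div_Gamma hα β (c * s ^ α)).mul_left (s ^ (β - 1))

theorem deriv_deriv_rpow_mul_mittagLeffler (hα : 1 ≤ α) (β c : ℝ) {s : ℝ} (hs : 0 < s) :
    deriv (deriv fun s => s ^ (β - 1) * mittagLeffler α β (c * s ^ α)) s =
      s ^ (β - 3) * mittagLeffler α (β - 2) (c * s ^ α) := by
  have hderiv : deriv (fun s => s ^ (β - 1) * mittagLeffler α β (c * s ^ α)) =ᶠ[𝓝 s]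
      fun y => y ^ (β - 1 - 1) * mittagLeffler α (β - 1) (c * y ^ α) := by
    filter_upwards [Ioi_mem_nhds hs] with y hy
    rw [(hasDerivAt_rpow_mul_mittagLeffler hα β c hy).deriv, sub_sub, one_add_one_eq_two]
  rw [hderiv.deriv_eq, (hasDerivAt_rpow_mul_mittagLeffler hα (β - 1) c hs).deriv]
  ring_nf

theorem integral_sub_rpow_mul_rpow_mul_mittagLeffler (hα : 1 ≤ α) {β γ : ℝ} (hβ : 0 < β)
    (hγ : 0 < γ) (c : ℝ) {t : ℝ} (ht : 0 < t) :
    ∫ τ in 0..t, (t - τ) ^ (γ - 1) * (τ ^ (β - 1) * mittagLeffler α β (c * τ ^ α)) =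
      Gamma γ * (t ^ (β + γ - 1) * mittagLeffler α (β + γ) (c * t ^ α)) := by
  set b : ℕ → ℝ := fun k => c ^ k / Gamma (α * k + β)
  set g : ℕ → ℝ → ℝ := fun k τ => τ ^ (α * k + β - 1) * (t - τ) ^ (γ - 1)
  have hpos : ∀ k : ℕ, 0 < α * k + β := fun k => by
    have : (0 : ℝ) ≤ α * k := by positivity
    linarith
  have hbeta : ∀ k, ∫ τ in 0..t, g k τ =
      t ^ (α * k + β + γ - 1) * (Gamma (α * k + β) * Gamma γ / Gamma (α * k + β + γ)) :=
    fun k => integral_rpow_mul_sub_rpow (hpos k) hγ ht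
  have hbeta_pos : ∀ k, 0 < ∫ τ in 0..t, g k τ := fun k => by
    rw [hbeta]
    have := hpos k
    positivity
  have hterm : ∀ k, b k * ∫ τ in 0..t, g k τ =
      Gamma γ * t ^ (β + γ - 1) * ((c * t ^ α) ^ k / Gamma (α * k + (β + γ))) := fun k => by
    rw [hbeta, show α * k + β + γ - 1 = α * k + (β + γ - 1) by ring, rpow_mul_natCast_add ht,
      ← add_assoc]
    have := (hpos k).ne'
    simp only [b]
    field_simp
    ring
  simp only [integral_of_le ht.le] at hbeta_pos hterm
  rw [integral_of_le ht.le]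
  calc ∫ τ in Ioc 0 t, (t - τ) ^ (γ - 1) * (τ ^ (β - 1) * mittagLeffler α β (c * τ ^ α))
      = ∫ τ in Ioc 0 t, ∑' k, b k * g k τ := by
        refine setIntegral_congr_fun measurableSet_Ioc fun τ hτ => ?_
        rw [rpow_mul_mittagLeffler_eq_tsum β c hτ.1, ← tsum_mul_left]
        exact tsum_congr fun k => by ring
    _ = ∑' k, b k * ∫ τ in Ioc 0 t, g k τ := by
        refine integral_tsum_mul_of_nonneg (fun k => ?_) (fun k => ?_) ?_
        · exact ae_restrict_of_forall_mem measurableSet_Ioc fun τ hτ =>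
            mul_nonneg (rpow_nonneg hτ.1.le _) (rpow_nonneg (sub_nonneg.2 hτ.2) _)
        · exact Integrable.of_integral_ne_zero (hbeta_pos k).ne'
        · refine ((summable_pow_div_Gamma hα (β + γ) (c * t ^ α)).mul_left
            (Gamma γ * t ^ (β + γ - 1))).abs.congr fun k => ?_
          rw [← hterm, abs_mul, abs_of_pos (hbeta_pos k)]
    _ = Gamma γ * (t ^ (β + γ - 1) * mittagLeffler α (β + γ) (c * t ^ α)) := by
        rw [tsum_congr hterm, tsum_mul_left, mittagLeffler, mul_assoc]

end MittagLeffler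

theorem caputo_mittagLeffler_one_general (α lam t : ℝ) (hα₁ : 1 < α) (hα₂ : α < 2)
    (ht : 0 < t) :
    (∀ τ : ℝ, 0 < τ →
        deriv (deriv (fun s : ℝ => mittagLeffler α 1 (-lam * s ^ α))) τ =
          -lam * τ ^ (α - 2) * mittagLeffler α (α - 1) (-lam * τ ^ α)) ∧
      (1 / Real.Gamma (2 - α)) *
          ∫ τ in (0 : ℝ)..t, (t - τ) ^ (1 - α) *
            (-lam * τ ^ (α - 2) * mittagLeffler α (α - 1) (-lam * τ ^ α))
        = -lam * mittagLeffler α 1 (-lam * t ^ α) := by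
  have hα : 1 ≤ α := hα₁.le
  refine ⟨fun τ hτ => ?_, ?_⟩
  · have hf : (fun s : ℝ => mittagLeffler α 1 (-lam * s ^ α)) =
        fun s => s ^ ((1 : ℝ) - 1) * mittagLeffler α 1 (-lam * s ^ α) := by simp
    have hΓ : Gamma (1 - 2) = 0 := by
      rw [show (1 : ℝ) - 2 = -(1 : ℕ) by norm_num, Gamma_neg_nat_eq_zero]
    rw [hf, deriv_deriv_rpow_mul_mittagLeffler hα 1 (-lam) hτ,
      mittagLeffler_eq_inv_Gamma_add_mul hα, hΓ, inv_zero, zero_add,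
      show α + (1 - 2) = α - 1 by ring, show α - 2 = α + (1 - 3) by ring, rpow_add hτ]
    ring
  · have hintegrand : ∀ τ, (t - τ) ^ (1 - α) *
        (-lam * τ ^ (α - 2) * mittagLeffler α (α - 1) (-lam * τ ^ α)) =
        -lam * ((t - τ) ^ (2 - α - 1) *
          (τ ^ (α - 1 - 1) * mittagLeffler α (α - 1) (-lam * τ ^ α))) := by
      intro τ
      rw [show 2 - α - 1 = 1 - α by ring, show α - 1 - 1 = α - 2 by ring]
      ring
    rw [integral_congr fun τ _ => hintegrand τ, intervalIntegral.integral_const_mul,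
      integral_sub_rpow_mul_rpow_mul_mittagLeffler hα (by linarith) (by linarith) (-lam) ht,
      show α - 1 + (2 - α) = 1 by ring, sub_self, rpow_zero, one_mul]
    have := (Gamma_pos_of_pos (by linarith : 0 < 2 - α)).ne'
    field_simp

/-- For `α ∈ (1,2)`, `λ > 0` and `t > 0`, the Caputo derivative identity
`∂_t^α E_α(-λ t^α) = -λ E_α(-λ t^α)` holds: the second derivative of
`τ ↦ E_α(-λ τ^α)` on `(0,∞)` is `-λ τ^{α-2} E_{α,α-1}(-λ τ^α)`, and
`(1/Γ(2-α)) ∫_0^t (t-τ)^{1-α} (-λ τ^{α-2} E_{α,α-1}(-λ τ^α)) dτ = -λ E_α(-λ t^α)`. -/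
theorem caputo_mittagLeffler_one (α lam t : ℝ) (hα₁ : 1 < α) (hα₂ : α < 2)
    (hlam : 0 < lam) (ht : 0 < t) :
    (∀ τ : ℝ, 0 < τ →
        deriv (deriv (fun s : ℝ => mittagLeffler α 1 (-lam * s ^ α))) τ =
          -lam * τ ^ (α - 2) * mittagLeffler α (α - 1) (-lam * τ ^ α)) ∧
      (1 / Real.Gamma (2 - α)) *
          ∫ τ in (0 : ℝ)..t, (t - τ) ^ (1 - α) *
            (-lam * τ ^ (α - 2) * mittagLeffler α (α - 1) (-lam * τ ^ α))
        = -lam * mittagLeffler α 1 (-lam * t ^ α) :=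
  caputo_mittagLeffler_one_general α lam t hα₁ hα₂ ht
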